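/- Let H be a square root of a connected graph G with at least three vertices such that H − S is isomorphic to pK_1 + qK_2 for a set S ⊆ V(G). Then every two distinct S-isolated vertices of H with the same neighborhoods in S are true twins in G. -/

import Mathlib

/-! An `S`-isolated vertex has all its `H`-neighbours in `S`, so two such vertices with the same
neighbourhood in `S` have the same open neighbourhood in `H`. Since `G = H²` is connected and
nontrivial, this common neighbourhood contains some `s`, and then the two vertices are adjacent
in `G` through `s`, while every other vertex is at the same `H`-distance (at most two) from both. -/

open SimpleGraph

/-- The closed neighborhood `N_G[v]` of a vertex `v`. -/
def closedNbhd {V : Type*} (G : SimpleGraph V) (v : V) : Set V :=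
  insert v (G.neighborSet v)

/-- An ordered pair `(x, y)` is comparable if `N_G[x] ⊆ N_G[y]`. -/
def ComparablePair {V : Type*} (G : SimpleGraph V) (x y : V) : Prop :=
  closedNbhd G x ⊆ closedNbhd G y

/-- `(x, y) ~mt (z, w)`: matched twins. -/
def MatchedTwins {V : Type*} (G : SimpleGraph V) (x y z w : V) : Prop :=
  closedNbhd G x \ {y} = closedNbhd G z \ {w} ∧
  closedNbhd G y \ {x} = closedNbhd G w \ {z}

/-- `(x, y) ~nt (z, w)`: nested twins. -/
def NestedTwins {V : Type*} (G : SimpleGraph V) (x y z w : V) : Prop :=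
  G.neighborSet x \ {y} = G.neighborSet z \ {w} ∧
  closedNbhd G y \ {x} = closedNbhd G w \ {z}

/-- The square `H²` of a graph: two distinct vertices are adjacent iff they are
at distance at most two in `H`. -/
def squareGraph {V : Type*} (H : SimpleGraph V) : SimpleGraph V where
  Adj u v := u ≠ v ∧ (H.Adj u v ∨ ∃ w, H.Adj u w ∧ H.Adj w v)
  symm := by
    refine ⟨?_⟩
    rintro u v ⟨hne, h⟩
    refine ⟨hne.symm, ?_⟩
    rcases h with h | ⟨w, h1, h2⟩
    · exact Or.inl h.symm
    · exact Or.inr ⟨w, h2.symm, h1.symm⟩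
  loopless := ⟨by rintro u ⟨hne, _⟩; exact hne rfl⟩

/-- `F` is (isomorphic to) a disjoint union `pK₁ + qK₂`: it has maximum degree at most
one, `p` vertices of degree zero and `q` edges. -/
def IsDisjUnionK1K2 {W : Type*} (F : SimpleGraph W) (p q : ℕ) : Prop :=
  (∀ u v w : W, F.Adj u v → F.Adj u w → v = w) ∧
  {v : W | ∀ w, ¬ F.Adj v w}.ncard = p ∧
  F.edgeSet.ncard = q

/-- `ab` is an `S`-matching edge of type 1 in `H`. -/
def Type1Edge {V : Type*} (H : SimpleGraph V) (S : Set V) (a b : V) : Prop :=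
  a ∉ S ∧ b ∉ S ∧ H.Adj a b ∧
  H.neighborSet a ∩ S = ∅ ∧ (H.neighborSet b ∩ S).Nonempty

/-- `ab` is an `S`-matching edge of type 2 in `H`. -/
def Type2Edge {V : Type*} (H : SimpleGraph V) (S : Set V) (a b : V) : Prop :=
  a ∉ S ∧ b ∉ S ∧ H.Adj a b ∧
  (H.neighborSet a ∩ S).Nonempty ∧ (H.neighborSet b ∩ S).Nonempty ∧
  H.neighborSet a ∩ H.neighborSet b ∩ S = ∅

/-- `ab` is an `S`-matching edge of type 3 in `H`. -/
def Type3Edge {V : Type*} (H : SimpleGraph V) (S : Set V) (a b : V) : Prop :=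
  a ∉ S ∧ b ∉ S ∧ H.Adj a b ∧
  (H.neighborSet a ∩ H.neighborSet b ∩ S).Nonempty

namespace SimpleGraph

variable {V : Type*} {H : SimpleGraph V} {a b : V}

theorem squareGraph_adj :
    (squareGraph H).Adj a b ↔ a ≠ b ∧ (H.Adj a b ∨ ∃ w, H.Adj a w ∧ H.Adj w b) :=
  Iff.rfl

theorem IsIsolated.squareGraph (h : H.IsIsolated a) : (squareGraph H).IsIsolated a :=
  fun _ ⟨_, hadj⟩ => hadj.elim (h _) fun ⟨w, hw, _⟩ => h w hw

theorem closedNbhd_squareGraph_subset_of_neighborSet_eq (hN : H.neighborSet a = H.neighborSet b)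
    (ha : ¬ H.IsIsolated a) : closedNbhd (squareGraph H) a ⊆ closedNbhd (squareGraph H) b := by
  have hadj : ∀ y, H.Adj a y ↔ H.Adj b y := Set.ext_iff.mp hN
  obtain ⟨s, has⟩ := exists_adj_iff_not_isIsolated.mpr ha
  intro x hx
  by_cases hxb : x = b
  · exact Or.inl hxb
  refine Or.inr (squareGraph_adj.mpr ⟨Ne.symm hxb, ?_⟩)
  rcases hx with rfl | ⟨-, hx | ⟨w, haw, hwx⟩⟩
  · exact Or.inr ⟨s, (hadj s).mp has, has.symm⟩
  · exact Or.inl ((hadj x).mp hx)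
  · exact Or.inr ⟨w, (hadj w).mp haw, hwx⟩

theorem closedNbhd_squareGraph_eq_of_neighborSet_eq (hN : H.neighborSet a = H.neighborSet b)
    (ha : ¬ H.IsIsolated a) : closedNbhd (squareGraph H) a = closedNbhd (squareGraph H) b := by
  have hb : ¬ H.IsIsolated b := by rwa [← neighborSet_nonempty, ← hN, neighborSet_nonempty]
  exact (closedNbhd_squareGraph_subset_of_neighborSet_eq hN ha).antisymm
    (closedNbhd_squareGraph_subset_of_neighborSet_eq hN.symm hb)

end SimpleGraph

theorem stmt9_general {V : Type*} [Fintype V] (G H : SimpleGraph V) (S : Set V)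
    (hconn : G.Connected) (hcard : 3 ≤ Fintype.card V)
    (hsq : G = squareGraph H)
    (u v : V)
    (hui : ∀ w, w ∉ S → ¬ H.Adj u w) (hvi : ∀ w, w ∉ S → ¬ H.Adj v w)
    (hnb : H.neighborSet u ∩ S = H.neighborSet v ∩ S) :
    closedNbhd G u = closedNbhd G v := by
  subst hsq
  have : Nontrivial V := Fintype.one_lt_card_iff_nontrivial.mp (by omega)
  have hNu : H.neighborSet u ⊆ S := fun w hw => of_not_not fun hwS => hui w hwS hw
  have hNv : H.neighborSet v ⊆ S := fun w hw => of_not_not fun hwS => hvi w hwS hw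
  rw [Set.inter_eq_left.mpr hNu, Set.inter_eq_left.mpr hNv] at hnb
  exact closedNbhd_squareGraph_eq_of_neighborSet_eq hnb
    fun hu => hconn.preconnected.not_isIsolated u hu.squareGraph

theorem stmt9 {V : Type*} [Fintype V] (G H : SimpleGraph V) (S : Set V) (p q : ℕ)
    (hconn : G.Connected) (hcard : 3 ≤ Fintype.card V)
    (hsq : G = squareGraph H)
    (hHS : IsDisjUnionK1K2 (SimpleGraph.induce Sᶜ H) p q)
    (u v : V) (hu : u ∉ S) (hv : v ∉ S) (huv : u ≠ v)
    (hui : ∀ w, w ∉ S → ¬ H.Adj u w) (hvi : ∀ w, w ∉ S → ¬ H.Adj v w)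
    (hnb : H.neighborSet u ∩ S = H.neighborSet v ∩ S) :
    closedNbhd G u = closedNbhd G v :=
  stmt9_general G H S hconn hcard hsq u v hui hvi hnb
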